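/- arXiv:1706.09564 — 3 statements merged into one kernel-verified Lean document; each statement's English description precedes it below -/
import Mathlib

section
/- Let 1 ≤ p ≤ q be integers and let E_{q,p} be the set of p-tuples (i_1,…,i_p) with entries in {1,…,q} such that every value appearing in the tuple appears at least twice. Then |E_{q,p}| ≤ ∑_{l=1}^{⌊p/2⌋} C(q,l)·l^p ≤ ⌊p/2⌋·C(q,⌊p/2⌋)·⌊p/2⌋^p ≤ (p/2)·e^{p/2}·q^{p/2}·(p/2)^{p/2}. -/
open Finset

lemma choose_mono_of_le_half (q : ℕ) : ∀ b, b ≤ q / 2 → ∀ a, a ≤ b → q.choose a ≤ q.choose b := by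
  intro b
  induction b with
  | zero => intro _ a ha; simp [Nat.le_zero.mp ha]
  | succ b ih =>
    intro hb a ha
    rcases Nat.eq_or_lt_of_le ha with h | h
    · subst h; exact le_refl _
    · exact le_trans (ih (by omega) a (by omega))
        (Nat.choose_le_succ_of_lt_half_left (by omega))

lemma pow_div_factorial_le_exp (m : ℕ) :
    (m : ℝ) ^ m / m.factorial ≤ Real.exp m := by
  have h := Real.sum_le_exp_of_nonneg (x := (m : ℝ)) (by positivity) (m + 1)
  refine le_trans ?_ h
  have := Finset.single_le_sum (f := fun i => (m : ℝ) ^ i / i.factorial)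
    (fun i _ => by positivity) (Finset.mem_range.mpr (Nat.lt_succ_self m))
  simpa using this

theorem effective_set_card_bound (p q : ℕ) (hp : 1 ≤ p) (hpq : p ≤ q) :
    (((Finset.univ.filter (fun i : Fin p → Fin q =>
          ∀ l : Fin q, (Finset.univ.filter fun k => i k = l).card ≠ 1)).card : ℝ)
        ≤ ∑ l ∈ Finset.Icc 1 (p / 2), (q.choose l : ℝ) * (l : ℝ) ^ p) ∧
    ((∑ l ∈ Finset.Icc 1 (p / 2), (q.choose l : ℝ) * (l : ℝ) ^ p)
        ≤ ((p / 2 : ℕ) : ℝ) * (q.choose (p / 2) : ℝ) * ((p / 2 : ℕ) : ℝ) ^ p) ∧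
    (((p / 2 : ℕ) : ℝ) * (q.choose (p / 2) : ℝ) * ((p / 2 : ℕ) : ℝ) ^ p
        ≤ ((p : ℝ) / 2) * Real.exp ((p : ℝ) / 2) * (q : ℝ) ^ ((p : ℝ) / 2)
            * ((p : ℝ) / 2) ^ ((p : ℝ) / 2)) := by
  have hq1 : 1 ≤ q := le_trans hp hpq
  set m := p / 2 with hm
  have hmhalf : (m : ℝ) ≤ (p : ℝ) / 2 := by
    rw [le_div_iff₀ (by norm_num)]
    have : m * 2 ≤ p := Nat.div_mul_le_self p 2
    exact_mod_cast this
  refine ⟨?_, ?_, ?_⟩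
  · -- Part 1
    -- natural number version first
    have hnat : (Finset.univ.filter (fun i : Fin p → Fin q =>
          ∀ l : Fin q, (Finset.univ.filter fun k => i k = l).card ≠ 1)).card
        ≤ ∑ l ∈ Finset.Icc 1 m, q.choose l * l ^ p := by
      have hsub : (Finset.univ.filter (fun i : Fin p → Fin q =>
            ∀ l : Fin q, (Finset.univ.filter fun k => i k = l).card ≠ 1))
          ⊆ (Finset.Icc 1 m).biUnion (fun l =>
              (Finset.powersetCard l (Finset.univ : Finset (Fin q))).biUnion
                (fun S => Fintype.piFinset (fun _ : Fin p => S))) := by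
        intro i hi
        rw [Finset.mem_filter] at hi
        have hfib := hi.2
        set S := Finset.image i Finset.univ with hS
        have hSne : S.Nonempty := ⟨i ⟨0, hp⟩, Finset.mem_image.mpr ⟨⟨0, hp⟩, Finset.mem_univ _, rfl⟩⟩
        -- each fiber over S has size ≥ 2
        have hfib2 : ∀ x ∈ S, 2 ≤ (Finset.univ.filter fun k => i k = x).card := by
          intro x hx
          rcases Finset.mem_image.mp hx with ⟨k, _, hk⟩
          have hne : (Finset.univ.filter fun k => i k = x).Nonempty :=
            ⟨k, Finset.mem_filter.mpr ⟨Finset.mem_univ _, hk⟩⟩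
          have h1 := hfib x
          have := Finset.card_pos.mpr hne
          omega
        have hcard : p = ∑ x ∈ S, (Finset.univ.filter fun k => i k = x).card := by
          have := Finset.card_eq_sum_card_fiberwise
            (f := i) (s := (Finset.univ : Finset (Fin p))) (t := S)
            (fun k _ => Finset.mem_image.mpr ⟨k, Finset.mem_univ _, rfl⟩)
          simpa using this
        have h2l : 2 * S.card ≤ p := by
          rw [hcard]
          calc 2 * S.card = ∑ _x ∈ S, 2 := by rw [Finset.sum_const]; ring
          _ ≤ _ := Finset.sum_le_sum hfib2
        have hmem : S.card ∈ Finset.Icc 1 m := by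
          rw [Finset.mem_Icc]
          constructor
          · exact Finset.card_pos.mpr hSne
          · omega
        refine Finset.mem_biUnion.mpr ⟨S.card, hmem, ?_⟩
        refine Finset.mem_biUnion.mpr ⟨S, ?_, ?_⟩
        · exact Finset.mem_powersetCard.mpr ⟨Finset.subset_univ _, rfl⟩
        · exact Fintype.mem_piFinset.mpr (fun k => Finset.mem_image.mpr ⟨k, Finset.mem_univ _, rfl⟩)
      calc (Finset.univ.filter (fun i : Fin p → Fin q =>
            ∀ l : Fin q, (Finset.univ.filter fun k => i k = l).card ≠ 1)).card
          ≤ ((Finset.Icc 1 m).biUnion (fun l =>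
              (Finset.powersetCard l (Finset.univ : Finset (Fin q))).biUnion
                (fun S => Fintype.piFinset (fun _ : Fin p => S)))).card :=
            Finset.card_le_card hsub
        _ ≤ ∑ l ∈ Finset.Icc 1 m, ((Finset.powersetCard l (Finset.univ : Finset (Fin q))).biUnion
                (fun S => Fintype.piFinset (fun _ : Fin p => S))).card :=
            Finset.card_biUnion_le
        _ ≤ ∑ l ∈ Finset.Icc 1 m, q.choose l * l ^ p := by
            refine Finset.sum_le_sum (fun l _ => ?_)
            calc ((Finset.powersetCard l (Finset.univ : Finset (Fin q))).biUnion
                (fun S => Fintype.piFinset (fun _ : Fin p => S))).card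
                ≤ ∑ S ∈ Finset.powersetCard l (Finset.univ : Finset (Fin q)),
                    (Fintype.piFinset (fun _ : Fin p => S)).card := Finset.card_biUnion_le
              _ = ∑ S ∈ Finset.powersetCard l (Finset.univ : Finset (Fin q)), l ^ p := by
                  refine Finset.sum_congr rfl (fun S hS => ?_)
                  rw [Fintype.card_piFinset]
                  rw [(Finset.mem_powersetCard.mp hS).2]
                  simp
              _ = q.choose l * l ^ p := by
                  rw [Finset.sum_const, Finset.card_powersetCard]
                  simp [mul_comm]
    calc ((Finset.univ.filter (fun i : Fin p → Fin q =>
          ∀ l : Fin q, (Finset.univ.filter fun k => i k = l).card ≠ 1)).card : ℝ)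
        ≤ ((∑ l ∈ Finset.Icc 1 m, q.choose l * l ^ p : ℕ) : ℝ) := by exact_mod_cast hnat
      _ = ∑ l ∈ Finset.Icc 1 m, (q.choose l : ℝ) * (l : ℝ) ^ p := by push_cast; ring
  · -- Part 2
    have hterm : ∀ l ∈ Finset.Icc 1 m, (q.choose l : ℝ) * (l : ℝ) ^ p
        ≤ (q.choose m : ℝ) * (m : ℝ) ^ p := by
      intro l hl
      rw [Finset.mem_Icc] at hl
      have hlm : l ≤ m := hl.2
      have hmq : m ≤ q / 2 := Nat.div_le_div_right hpq
      have h1 : (q.choose l : ℝ) ≤ (q.choose m : ℝ) := by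
        exact_mod_cast choose_mono_of_le_half q m hmq l hlm
      have h2 : ((l : ℝ)) ^ p ≤ ((m : ℝ)) ^ p := by
        apply pow_le_pow_left₀ (by positivity)
        exact_mod_cast hlm
      exact mul_le_mul h1 h2 (by positivity) (by positivity)
    calc ∑ l ∈ Finset.Icc 1 m, (q.choose l : ℝ) * (l : ℝ) ^ p
        ≤ ∑ _l ∈ Finset.Icc 1 m, (q.choose m : ℝ) * (m : ℝ) ^ p := Finset.sum_le_sum hterm
      _ = (m : ℝ) * ((q.choose m : ℝ) * (m : ℝ) ^ p) := by
          rw [Finset.sum_const, Nat.card_Icc]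
          simp [nsmul_eq_mul]
      _ = (m : ℝ) * (q.choose m : ℝ) * (m : ℝ) ^ p := by ring
  · -- Part 3
    rcases Nat.eq_zero_or_pos m with hm0 | hm1
    · rw [hm0]
      simp only [Nat.cast_zero, zero_mul]
      have hp0 : (0 : ℝ) < (p : ℝ) / 2 := by
        have : (1 : ℝ) ≤ (p : ℝ) := by exact_mod_cast hp
        linarith
      have hq0 : (0 : ℝ) < (q : ℝ) := by exact_mod_cast Nat.lt_of_lt_of_le Nat.zero_lt_one hq1
      positivity
    · -- main case
      have hmp : m ≤ p := Nat.div_le_self p 2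
      have hm0R : (0 : ℝ) < (m : ℝ) := by exact_mod_cast hm1
      have hqR : (0 : ℝ) < (q : ℝ) := by exact_mod_cast Nat.lt_of_lt_of_le Nat.zero_lt_one hq1
      set r : ℝ := (p : ℝ) / 2 with hr
      have hr0 : 0 < r := lt_of_lt_of_le hm0R hmhalf
      -- Step A : choose q m * m^p ≤ exp m * q^m * m^(p-m)
      have hA : (q.choose m : ℝ) * (m : ℝ) ^ p
          ≤ Real.exp m * (q : ℝ) ^ m * (m : ℝ) ^ (p - m) := by
        have h1 : (q.choose m : ℝ) ≤ (q : ℝ) ^ m / m.factorial := by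
          have := Nat.choose_le_pow_div (α := ℝ) m q
          simpa using this
        have hsplit : (m : ℝ) ^ p = (m : ℝ) ^ (p - m) * (m : ℝ) ^ m := by
          rw [← pow_add]
          congr 1
          omega
        have hfac : (0 : ℝ) < m.factorial := by exact_mod_cast m.factorial_pos
        calc (q.choose m : ℝ) * (m : ℝ) ^ p
            ≤ ((q : ℝ) ^ m / m.factorial) * (m : ℝ) ^ p :=
              mul_le_mul_of_nonneg_right h1 (by positivity)
          _ = (q : ℝ) ^ m * (m : ℝ) ^ (p - m) * ((m : ℝ) ^ m / m.factorial) := by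
              rw [hsplit]; field_simp
          _ ≤ (q : ℝ) ^ m * (m : ℝ) ^ (p - m) * Real.exp m := by
              exact mul_le_mul_of_nonneg_left (pow_div_factorial_le_exp m) (by positivity)
          _ = Real.exp m * (q : ℝ) ^ m * (m : ℝ) ^ (p - m) := by ring
      -- Step B : exp m * q^m * m^(p-m) ≤ exp r * q^r * r^r   (rpow)
      have hB : Real.exp m * (q : ℝ) ^ m * (m : ℝ) ^ (p - m)
          ≤ Real.exp r * (q : ℝ) ^ r * r ^ r := by
        set x : ℝ := Real.exp 1 * q with hx
        have hx1 : (1 : ℝ) ≤ x := by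
          have h1 : (1 : ℝ) ≤ Real.exp 1 := by
            have := Real.add_one_le_exp (1 : ℝ); linarith
          have h2 : (1 : ℝ) ≤ (q : ℝ) := by exact_mod_cast hq1
          calc (1 : ℝ) = 1 * 1 := by ring
            _ ≤ Real.exp 1 * q := mul_le_mul h1 h2 (by norm_num) (by linarith)
        have hx0 : (0 : ℝ) < x := lt_of_lt_of_le one_pos hx1
        have hδ : ((p - m : ℕ) : ℝ) = r + (r - (m : ℝ)) := by
          have : ((p - m : ℕ) : ℝ) = (p : ℝ) - (m : ℝ) := by
            push_cast [Nat.cast_sub hmp]; ring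
          rw [this, hr]; ring
        have hδ0 : 0 ≤ r - (m : ℝ) := by linarith [hmhalf]
        have hrx : r ≤ x := by
          have h2 : (1 : ℝ) ≤ Real.exp 1 := by
            have := Real.add_one_le_exp (1 : ℝ); linarith
          have hpq' : (p : ℝ) ≤ (q : ℝ) := by exact_mod_cast hpq
          have : r ≤ (q : ℝ) := by rw [hr]; linarith
          calc r ≤ (q : ℝ) := this
            _ = 1 * q := by ring
            _ ≤ Real.exp 1 * q := mul_le_mul_of_nonneg_right h2 (le_of_lt hqR)
        calc Real.exp m * (q : ℝ) ^ m * (m : ℝ) ^ (p - m)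
            = x ^ m * (m : ℝ) ^ (p - m) := by
              rw [hx, mul_pow, Real.exp_one_pow]
          _ ≤ x ^ m * r ^ (p - m) := by
              refine mul_le_mul_of_nonneg_left ?_ (by positivity)
              exact pow_le_pow_left₀ (le_of_lt hm0R) hmhalf _
          _ = x ^ (m : ℝ) * r ^ (((p - m : ℕ) : ℝ)) := by
              rw [← Real.rpow_natCast x m, ← Real.rpow_natCast r (p - m)]
          _ = x ^ (m : ℝ) * (r ^ r * r ^ (r - (m : ℝ))) := by
              rw [hδ, Real.rpow_add hr0]
          _ ≤ x ^ (m : ℝ) * (r ^ r * x ^ (r - (m : ℝ))) := by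
              refine mul_le_mul_of_nonneg_left ?_ (by positivity)
              refine mul_le_mul_of_nonneg_left ?_ (by positivity)
              exact Real.rpow_le_rpow (le_of_lt hr0) hrx hδ0
          _ = x ^ r * r ^ r := by
              rw [mul_comm (r ^ r) _, ← mul_assoc, ← Real.rpow_add hx0]
              congr 2
              ring
          _ = Real.exp r * (q : ℝ) ^ r * r ^ r := by
              rw [hx, Real.mul_rpow (le_of_lt (Real.exp_pos 1)) (le_of_lt hqR),
                Real.exp_one_rpow]
      -- combine
      have hCD : (q.choose m : ℝ) * (m : ℝ) ^ p ≤ Real.exp r * (q : ℝ) ^ r * r ^ r :=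
        le_trans hA hB
      have hmr : (m : ℝ) ≤ r := hmhalf
      calc ((m : ℕ) : ℝ) * (q.choose m : ℝ) * ((m : ℕ) : ℝ) ^ p
          = (m : ℝ) * ((q.choose m : ℝ) * (m : ℝ) ^ p) := by ring
        _ ≤ r * (Real.exp r * (q : ℝ) ^ r * r ^ r) := by
            refine mul_le_mul hmr hCD (by positivity) (le_of_lt hr0)
        _ = r * Real.exp r * (q : ℝ) ^ r * r ^ r := by ring
end

section
/- Let μ be a probability measure on a measurable space X and let ψ : X × X → ℝ be bounded measurable with ‖ψ‖_∞ < 1/(2e) and with ∫ ψ(z,x) dμ(x) = 0 for every z. Then for every N ≥ 1, ∫_{X^N} exp( (1/N) ∑_{j_1=1}^N ∑_{j_2=1}^N ψ(x_1, x_{j_1}) ψ(x_1, x_{j_2}) ) dμ^{⊗N}(x_1,…,x_N) ≤ 2(1 + 10α/(1−α)^3 + β/(1−β)), where α = (e‖ψ‖_∞)^4 < 1 and β = (√(2e)‖ψ‖_∞)^4 < 1. -/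
/-!
Write the double sum as `(ψ(x₁, x₁) + W)²` with `W = ∑_{j ≥ 2} ψ(x₁, x_j)`; since `|ψ| ≤ B`
the exponent is at most `2B² + (2/N) W²`. Conditionally on `x₁`, `W` is a sum of `N - 1`
independent centred variables with values in `[-B, B]`, hence sub-Gaussian with variance proxy
`(N - 1) B²` by Hoeffding's lemma. For a sub-Gaussian `Y` with proxy `c`, linearising the square
against a standard Gaussian `g`, `exp (t Y²) = 𝔼_g exp (√(2t) g Y)`, and exchanging the
integrals gives `𝔼 exp (t Y²) ≤ (1 - 2tc)^(-1/2)`. Hence the integral is at most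
`e^{2B²} (1 - 4B²)^(-1/2) ≤ 2`, and the right-hand side of the theorem is at least `2`.
-/

open MeasureTheory ProbabilityTheory Real

theorem integral_exp_mul_gaussianReal (a : ℝ) :
    ∫ g, exp (a * g) ∂gaussianReal 0 1 = exp (a ^ 2 / 2) := by
  simpa [mgf] using congrFun (mgf_id_gaussianReal (μ := 0) (v := 1)) a

theorem lintegral_exp_mul_sq_gaussianReal {s : ℝ} (hs : s < 1 / 2) :
    ∫⁻ g, ENNReal.ofReal (exp (s * g ^ 2)) ∂gaussianReal 0 1
      = ENNReal.ofReal (√(1 - 2 * s))⁻¹ := by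
  have hpdf : ∀ g : ℝ, gaussianPDFReal 0 1 g * exp (s * g ^ 2)
      = (√(2 * π))⁻¹ * exp (-(1 / 2 - s) * g ^ 2) := by
    intro g
    rw [gaussianPDFReal_def, mul_assoc, ← exp_add]
    congr 2
    · simp
    · push_cast; ring
  rw [gaussianReal_of_var_ne_zero _ one_ne_zero,
    lintegral_withDensity_eq_lintegral_mul _ (measurable_gaussianPDF _ _) (by fun_prop)]
  simp only [Pi.mul_apply, gaussianPDF_def]
  simp_rw [← ENNReal.ofReal_mul (gaussianPDFReal_nonneg _ _ _), hpdf]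
  rw [← ofReal_integral_eq_lintegral_ofReal
      ((integrable_exp_neg_mul_sq (by linarith)).const_mul _)
      (ae_of_all _ fun _ => by positivity),
    integral_const_mul, integral_gaussian, ← sqrt_inv, ← sqrt_mul (by positivity), ← sqrt_inv]
  congr 2
  field_simp

namespace ProbabilityTheory.HasSubgaussianMGF

variable {Ω : Type*} [MeasurableSpace Ω] {μ : Measure Ω} [IsProbabilityMeasure μ]
  {Y : Ω → ℝ} {c : NNReal}

theorem integral_exp_mul_sq_le (h : HasSubgaussianMGF Y c μ) {t : ℝ} (ht : 0 ≤ t)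
    (htc : 2 * t * c < 1) :
    ∫ ω, exp (t * Y ω ^ 2) ∂μ ≤ (√(1 - 2 * t * c))⁻¹ := by
  set a := √(2 * t)
  have ha : a ^ 2 = 2 * t := sq_sqrt (by positivity)
  have hY : AEMeasurable Y μ := h.aemeasurable
  have hlin : ∀ ω, ENNReal.ofReal (exp (t * Y ω ^ 2))
      = ∫⁻ g, ENNReal.ofReal (exp (a * g * Y ω)) ∂gaussianReal 0 1 := by
    intro ω
    simp_rw [mul_right_comm a _ (Y ω)]
    rw [← ofReal_integral_eq_lintegral_ofReal (integrable_exp_mul_gaussianReal _)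
      (ae_of_all _ fun _ => (exp_pos _).le), integral_exp_mul_gaussianReal, mul_pow, ha]
    ring_nf
  have hmgf : ∀ g, ∫⁻ ω, ENNReal.ofReal (exp (a * g * Y ω)) ∂μ
      ≤ ENNReal.ofReal (exp (t * c * g ^ 2)) := by
    intro g
    calc ∫⁻ ω, ENNReal.ofReal (exp (a * g * Y ω)) ∂μ = ENNReal.ofReal (mgf Y μ (a * g)) :=
          (ofReal_integral_eq_lintegral_ofReal (h.integrable_exp_mul _)
            (ae_of_all _ fun _ => (exp_pos _).le)).symm
      _ ≤ ENNReal.ofReal (exp (c * (a * g) ^ 2 / 2)) := ENNReal.ofReal_le_ofReal (h.mgf_le _)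
      _ = ENNReal.ofReal (exp (t * c * g ^ 2)) := by rw [mul_pow, ha]; ring_nf
  have hlint : ∫⁻ ω, ENNReal.ofReal (exp (t * Y ω ^ 2)) ∂μ
      ≤ ENNReal.ofReal (√(1 - 2 * t * c))⁻¹ := by
    calc ∫⁻ ω, ENNReal.ofReal (exp (t * Y ω ^ 2)) ∂μ
        = ∫⁻ g, ∫⁻ ω, ENNReal.ofReal (exp (a * g * Y ω)) ∂μ ∂gaussianReal 0 1 := by
          simp_rw [hlin]
          exact lintegral_lintegral_swap (by fun_prop)
      _ ≤ ∫⁻ g, ENNReal.ofReal (exp (t * c * g ^ 2)) ∂gaussianReal 0 1 :=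
          lintegral_mono hmgf
      _ = ENNReal.ofReal (√(1 - 2 * t * c))⁻¹ := by
          rw [lintegral_exp_mul_sq_gaussianReal (by linarith)]
          ring_nf
  rw [integral_eq_lintegral_of_nonneg_ae (ae_of_all _ fun _ => (exp_pos _).le) (by fun_prop)]
  exact ENNReal.toReal_le_of_le_ofReal (by positivity) hlint

theorem sum_pi (h : HasSubgaussianMGF Y c μ) (ι : Type*) [Fintype ι] :
    HasSubgaussianMGF (fun y : ι → Ω => ∑ i, Y (y i)) (Fintype.card ι * c)
      (Measure.pi fun _ => μ) := by
  have hcoord :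
      ∀ i, HasSubgaussianMGF (fun y : ι → Ω => Y (y i)) c (Measure.pi fun _ => μ) :=
    fun i => .of_map (measurable_pi_apply i).aemeasurable
      (by rwa [(measurePreserving_eval (fun _ => μ) i).map_eq])
  simpa using sum_of_iIndepFun (iIndepFun_pi fun _ => h.aemeasurable) (s := .univ)
    fun i _ => hcoord i

end ProbabilityTheory.HasSubgaussianMGF

section

variable {X : Type*} [MeasurableSpace X] {μ : Measure X} [IsProbabilityMeasure μ]

theorem integral_exp_mul_sq_sum_pi_le {f : X → ℝ} (hf : Measurable f) {B : ℝ}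
    (hfB : ∀ x, |f x| ≤ B) (hf0 : ∫ x, f x ∂μ = 0) (ι : Type*) [Fintype ι] {t s : ℝ}
    (ht : 0 ≤ t) (htB : 2 * t * (Fintype.card ι * B ^ 2) ≤ s) (hs : s < 1) :
    ∫ y : ι → X, exp (t * (∑ i, f (y i)) ^ 2) ∂(Measure.pi fun _ => μ)
      ≤ (√(1 - s))⁻¹ := by
  have hoeffding := hasSubgaussianMGF_of_mem_Icc_of_integral_eq_zero hf.aemeasurable
    (ae_of_all μ fun x => abs_le.1 (hfB x)) hf0
  have hparam :
      ((Fintype.card ι * (‖B - -B‖₊ / 2) ^ 2 : NNReal) : ℝ) = Fintype.card ι * B ^ 2 := by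
    rw [NNReal.coe_mul, NNReal.coe_pow, NNReal.coe_div, coe_nnnorm, Real.norm_eq_abs,
      sub_neg_eq_add, ← two_mul, abs_mul, abs_two]
    simp
  rw [← hparam] at htB
  exact ((hoeffding.sum_pi ι).integral_exp_mul_sq_le ht (by linarith)).trans
    (inv_anti₀ (sqrt_pos.2 (by linarith)) (sqrt_le_sqrt (by linarith)))

theorem integrable_exp_mul_sq_sum {ψ : X → X → ℝ} (hψ : Measurable (Function.uncurry ψ))
    {B : ℝ} (hB : ∀ z x, |ψ z x| ≤ B) (ι : Type*) [Fintype ι] (t : ℝ) :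
    Integrable (fun p : X × (ι → X) => exp (t * (∑ j, ψ p.1 (p.2 j)) ^ 2))
      (μ.prod (Measure.pi fun _ => μ)) := by
  have hψj : ∀ j, Measurable fun p : X × (ι → X) => ψ p.1 (p.2 j) :=
    fun j => hψ.comp (f := fun p : X × (ι → X) => (p.1, p.2 j)) (by fun_prop)
  have hmeas : Measurable fun p : X × (ι → X) => exp (t * (∑ j, ψ p.1 (p.2 j)) ^ 2) := by
    fun_prop
  refine .of_bound hmeas.aestronglyMeasurable (exp (|t| * (Fintype.card ι * B) ^ 2))
    (ae_of_all _ fun p => ?_)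
  have hsum : |∑ j, ψ p.1 (p.2 j)| ≤ Fintype.card ι * B :=
    (Finset.abs_sum_le_sum_abs _ _).trans
      (by simpa using Finset.sum_le_card_nsmul Finset.univ _ B fun j _ => hB p.1 (p.2 j))
  rw [Real.norm_of_nonneg (exp_pos _).le, exp_le_exp]
  calc t * (∑ j, ψ p.1 (p.2 j)) ^ 2 ≤ |t| * |∑ j, ψ p.1 (p.2 j)| ^ 2 := by
        rw [sq_abs]; exact mul_le_mul_of_nonneg_right (le_abs_self t) (sq_nonneg _)
    _ ≤ |t| * (Fintype.card ι * B) ^ 2 := by gcongr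

theorem one_div_mul_add_sq_le {a w B N : ℝ} (ha : |a| ≤ B) (hN : 1 ≤ N) :
    1 / N * (a + w) ^ 2 ≤ 2 * B ^ 2 + 2 / N * w ^ 2 := by
  have ha2 : a ^ 2 ≤ B ^ 2 := by rw [← sq_abs]; exact pow_le_pow_left₀ (abs_nonneg a) ha 2
  calc 1 / N * (a + w) ^ 2 ≤ 1 / N * (2 * (a ^ 2 + w ^ 2)) := by gcongr; exact add_sq_le
    _ = a ^ 2 * (2 / N) + 2 / N * w ^ 2 := by ring
    _ ≤ B ^ 2 * 2 + 2 / N * w ^ 2 := by gcongr; exact div_le_self zero_le_two hN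
    _ = 2 * B ^ 2 + 2 / N * w ^ 2 := by ring

theorem integral_exp_sq_sum_pi_le {ψ : X → X → ℝ} (hψ : Measurable (Function.uncurry ψ))
    {B : ℝ} (hB : ∀ z x, |ψ z x| ≤ B) (hcancel : ∀ z, ∫ x, ψ z x ∂μ = 0)
    (hB4 : 4 * B ^ 2 < 1) {n : ℕ} (i : Fin (n + 1)) :
    ∫ x : Fin (n + 1) → X, exp ((1 / (n + 1 : ℕ) : ℝ) * (∑ j, ψ (x i) (x j)) ^ 2)
        ∂(Measure.pi fun _ => μ)
      ≤ exp (2 * B ^ 2) * (√(1 - 4 * B ^ 2))⁻¹ := by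
  set t : ℝ := 2 / (n + 1 : ℕ)
  set G : X × (Fin n → X) → ℝ := fun p => exp (t * (∑ j, ψ p.1 (p.2 j)) ^ 2)
  have hG : Integrable G (μ.prod (Measure.pi fun _ => μ)) := integrable_exp_mul_sq_sum hψ hB _ t
  have hmp := measurePreserving_piFinSuccAbove (fun _ : Fin (n + 1) => μ) i
  set e := MeasurableEquiv.piFinSuccAbove (fun _ : Fin (n + 1) => X) i
  have hpoint : ∀ x : Fin (n + 1) → X,
      exp ((1 / (n + 1 : ℕ) : ℝ) * (∑ j, ψ (x i) (x j)) ^ 2)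
      ≤ exp (2 * B ^ 2) * G (e x) := by
    intro x
    rw [← exp_add, Fin.sum_univ_succAbove _ i, exp_le_exp]
    exact one_div_mul_add_sq_le (hB _ _) (by simp)
  have hinner :
      ∀ z, ∫ y, G (z, y) ∂(Measure.pi fun _ => μ) ≤ (√(1 - 4 * B ^ 2))⁻¹ := by
    intro z
    have htn : t * n ≤ 2 := by
      rw [div_mul_eq_mul_div, div_le_iff₀ (by positivity)]
      push_cast; linarith
    refine integral_exp_mul_sq_sum_pi_le (hψ.comp measurable_prodMk_left) (hB z) (hcancel z)
      (Fin n) (by positivity) ?_ hB4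
    rw [Fintype.card_fin]
    nlinarith [sq_nonneg B]
  calc ∫ x, exp ((1 / (n + 1 : ℕ) : ℝ) * (∑ j, ψ (x i) (x j)) ^ 2)
        ∂(Measure.pi fun _ => μ)
      ≤ exp (2 * B ^ 2) * ∫ x, G (e x) ∂(Measure.pi fun _ => μ) := by
        rw [← integral_const_mul]
        exact integral_mono_of_nonneg (ae_of_all _ fun _ => (exp_pos _).le)
          (((hmp.integrable_comp_emb e.measurableEmbedding).2 hG).const_mul _) (ae_of_all _ hpoint)
    _ = exp (2 * B ^ 2) * ∫ z, ∫ y, G (z, y) ∂(Measure.pi fun _ => μ) ∂μ := by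
        rw [hmp.integral_comp' G, integral_prod _ hG]
    _ ≤ exp (2 * B ^ 2) * ∫ _z, (√(1 - 4 * B ^ 2))⁻¹ ∂μ := by
        exact mul_le_mul_of_nonneg_left
          (integral_mono hG.integral_prod_left (integrable_const _) hinner) (exp_pos _).le
    _ = exp (2 * B ^ 2) * (√(1 - 4 * B ^ 2))⁻¹ := by simp

end

theorem exp_two_mul_sq_mul_inv_sqrt_le_two {B : ℝ} (hB : 8 * B ^ 2 ≤ 1) :
    exp (2 * B ^ 2) * (√(1 - 4 * B ^ 2))⁻¹ ≤ 2 := by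
  have hpos : 0 < 1 - 4 * B ^ 2 := by nlinarith
  rw [mul_inv_le_iff₀ (sqrt_pos.2 hpos)]
  refine le_of_pow_le_pow_left₀ two_ne_zero (by positivity) ?_
  have hexp : exp (2 * B ^ 2) ^ 2 * (1 - 4 * B ^ 2) ≤ 1 := by
    have hsq : exp (2 * B ^ 2) ^ 2 = exp (4 * B ^ 2) := by rw [← exp_nat_mul]; ring_nf
    have hinv : exp (-(4 * B ^ 2)) * exp (4 * B ^ 2) = 1 := by rw [← exp_add]; simp
    rw [hsq]
    nlinarith [add_one_le_exp (-(4 * B ^ 2)), exp_pos (4 * B ^ 2)]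
  rw [mul_pow, sq_sqrt hpos.le]
  nlinarith

theorem two_le_two_mul_one_add_div_add_div {α β : ℝ} (hα0 : 0 ≤ α) (hα : α < 1)
    (hβ0 : 0 ≤ β) (hβ : β < 1) : 2 ≤ 2 * (1 + 10 * α / (1 - α) ^ 3 + β / (1 - β)) := by
  have : 0 ≤ 10 * α / (1 - α) ^ 3 := by have := sub_pos.2 hα; positivity
  have : 0 ≤ β / (1 - β) := div_nonneg hβ0 (sub_pos.2 hβ).le
  linarith

theorem law_of_large_numbers_exponential {X : Type*} [MeasurableSpace X]
    (μ : Measure X) [IsProbabilityMeasure μ]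
    (ψ : X → X → ℝ) (hmeas : Measurable (Function.uncurry ψ))
    (B : ℝ) (hB : ∀ z x, |ψ z x| ≤ B) (hBsmall : B < 1 / (2 * Real.exp 1))
    (hcancel : ∀ z, ∫ x, ψ z x ∂μ = 0)
    (N : ℕ) (hN : 1 ≤ N) :
    ∫ x : Fin N → X, Real.exp ((1 / N : ℝ) * ∑ j1 : Fin N, ∑ j2 : Fin N,
        ψ (x ⟨0, hN⟩) (x j1) * ψ (x ⟨0, hN⟩) (x j2))
      ∂(Measure.pi fun _ => μ)
    ≤ 2 * (1 + 10 * (Real.exp 1 * B) ^ 4 / (1 - (Real.exp 1 * B) ^ 4) ^ 3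
        + (Real.sqrt (2 * Real.exp 1) * B) ^ 4
            / (1 - (Real.sqrt (2 * Real.exp 1) * B) ^ 4)) := by
  obtain ⟨x₀⟩ := nonempty_of_isProbabilityMeasure μ
  have hB0 : 0 ≤ B := (abs_nonneg _).trans (hB x₀ x₀)
  have h2eB : 2 * exp 1 * B < 1 := by rwa [lt_div_iff₀' (by positivity)] at hBsmall
  have h4B : 4 * B < 1 := by nlinarith [exp_one_gt_d9]
  have hα : (exp 1 * B) ^ 4 < 1 := pow_lt_one₀ (by positivity) (by linarith) four_ne_zero
  have hβ : (√(2 * exp 1) * B) ^ 4 < 1 := by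
    have hsplit : (√(2 * exp 1) * B) ^ 4 = (2 * exp 1 * B) ^ 2 * B ^ 2 := by
      rw [mul_pow, show 4 = 2 * 2 from rfl, pow_mul, sq_sqrt (by positivity)]; ring
    rw [hsplit]
    nlinarith [pow_lt_one₀ (by positivity) h2eB two_ne_zero]
  obtain ⟨n, rfl⟩ : ∃ n, N = n + 1 := ⟨N - 1, by omega⟩
  simp_rw [← Finset.sum_mul_sum, ← sq]
  calc _ ≤ exp (2 * B ^ 2) * (√(1 - 4 * B ^ 2))⁻¹ :=
        integral_exp_sq_sum_pi_le hmeas hB hcancel (by nlinarith) _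
    _ ≤ 2 := exp_two_mul_sq_mul_inv_sqrt_le_two (by nlinarith)
    _ ≤ _ := two_le_two_mul_one_add_div_add_div (by positivity) hα (by positivity) hβ
end

section
/- Let N ≥ 1, let μ be a probability measure on X, and let ψ : X → ℝ satisfy sup_{p≥1} ‖ψ‖_{L^p(μ)}/p =: L < ∞. Then for every integer k ≥ 1 with 4k > N, (1/(2k)!) ∫_{X^N} ( ∑_{i=1}^N ψ(x_i) )^{2k} dμ^{⊗N} ≤ e^{2k} L^{2k} · C(2k+N−1, N−1) ≤ (3e^2 L)^{2k}. -/
open MeasureTheory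

lemma smb_pow_le_exp_mul_factorial (n : ℕ) :
    (n : ℝ) ^ n ≤ Real.exp 1 ^ n * n.factorial := by
  have h1 : (n:ℝ)^n / n.factorial ≤ Real.exp n := by
    refine le_trans ?_ (Real.sum_le_exp_of_nonneg (n.cast_nonneg) (n+1))
    exact Finset.single_le_sum (f := fun i => (n:ℝ)^i / i.factorial)
      (fun i _ => by positivity) (Finset.self_mem_range_succ n)
  have h2 : Real.exp (n : ℝ) = Real.exp 1 ^ n := by
    rw [← Real.exp_nat_mul, mul_one]
  have hf : (0:ℝ) < n.factorial := by exact_mod_cast n.factorial_pos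
  rw [div_le_iff₀ hf] at h1
  calc (n:ℝ)^n ≤ Real.exp n * n.factorial := h1
    _ = Real.exp 1 ^ n * n.factorial := by rw [h2]

lemma smb_choose_le_two_pow (n r : ℕ) : n.choose r ≤ 2 ^ n := by
  rcases le_or_gt r n with h | h
  · calc n.choose r ≤ ∑ m ∈ Finset.range (n+1), n.choose m :=
        Finset.single_le_sum (fun _ _ => Nat.zero_le _)
          (Finset.mem_range.2 (Nat.lt_succ_of_le h))
    _ = 2 ^ n := Nat.sum_range_choose n
  · simp [Nat.choose_eq_zero_of_lt h]

lemma smb_card_piAntidiag (N n : ℕ) (hN : 1 ≤ N) :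
    (Finset.piAntidiag (Finset.univ : Finset (Fin N)) n).card = (n + N - 1).choose (N - 1) := by
  have h1 : (Finset.piAntidiag (Finset.univ : Finset (Fin N)) n).card
      = ((Finset.univ : Finset (Fin N)).sym n).card := by
    rw [← Finset.map_sym_eq_piAntidiag, Finset.card_map]
  rw [h1, Finset.sym_univ, Finset.card_univ, Sym.card_sym_eq_choose, Fintype.card_fin]
  have h2 : N + n - 1 = n + N - 1 := by omega
  have h3 : n ≤ n + N - 1 := by omega
  rw [h2, ← Nat.choose_symm h3]
  congr 1
  omega

lemma smb_moment {X : Type*} [MeasurableSpace X] (μ : Measure X) [IsProbabilityMeasure μ]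
    (ψ : X → ℝ) (hψ0 : ∀ x, 0 ≤ ψ x) (L : ℝ) (hL0 : 0 ≤ L)
    (hL : ∀ p : ℝ, 1 ≤ p → (∫ x, ψ x ^ p ∂μ) ^ (1 / p) ≤ p * L) (a : ℕ) :
    (∫ x, ψ x ^ a ∂μ) ≤ Real.exp 1 ^ a * a.factorial * L ^ a := by
  rcases Nat.eq_zero_or_pos a with rfl | ha
  · simp
  · have hcast : (1:ℝ) ≤ (a:ℝ) := by exact_mod_cast ha
    have h := hL a hcast
    have hrw : (∫ x, ψ x ^ ((a:ℕ):ℝ) ∂μ) = ∫ x, ψ x ^ a ∂μ := by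
      congr 1; funext x; rw [Real.rpow_natCast]
    rw [hrw] at h
    set I := ∫ x, ψ x ^ a ∂μ with hI
    have hI0 : 0 ≤ I := integral_nonneg fun x => pow_nonneg (hψ0 x) a
    have key : I ≤ ((a:ℝ) * L) ^ a := by
      have h2 := pow_le_pow_left₀ (Real.rpow_nonneg hI0 _) h a
      rwa [← Real.rpow_natCast (I ^ (1/(a:ℝ))) a, ← Real.rpow_mul hI0, one_div,
        inv_mul_cancel₀ (by positivity), Real.rpow_one] at h2
    calc I ≤ ((a:ℝ)*L)^a := key
      _ = (a:ℝ)^a * L^a := mul_pow _ _ _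
      _ ≤ (Real.exp 1 ^ a * a.factorial) * L^a :=
          mul_le_mul_of_nonneg_right (smb_pow_le_exp_mul_factorial a) (by positivity)

theorem sum_moment_bound_k_large {X : Type*} [MeasurableSpace X]
    (μ : Measure X) [IsProbabilityMeasure μ]
    (ψ : X → ℝ) (hψ0 : ∀ x, 0 ≤ ψ x) (hmeas : Measurable ψ)
    (L : ℝ) (hL0 : 0 ≤ L)
    (hL : ∀ p : ℝ, 1 ≤ p → (∫ x, ψ x ^ p ∂μ) ^ (1 / p) ≤ p * L)
    (N k : ℕ) (hN : 1 ≤ N) (hk : 1 ≤ k) (h4k : N < 4 * k) :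
    (1 / ((2 * k).factorial) : ℝ) * ∫ x : Fin N → X,
        (∑ i : Fin N, ψ (x i)) ^ (2 * k) ∂(Measure.pi fun _ => μ)
      ≤ Real.exp 1 ^ (2 * k) * L ^ (2 * k) * ((2 * k + N - 1).choose (N - 1)) ∧
    (Real.exp 1 ^ (2 * k) * L ^ (2 * k) * ((2 * k + N - 1).choose (N - 1)) : ℝ)
      ≤ (3 * Real.exp 1 ^ 2 * L) ^ (2 * k) := by
  constructor
  · -- first inequality
    letI : MeasureSpace X := ⟨μ⟩
    haveI : SigmaFinite (volume : Measure X) := inferInstanceAs (SigmaFinite μ)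
    have hvol : (Measure.pi fun _ : Fin N => μ) = (volume : Measure (Fin N → X)) := rfl
    rw [hvol]
    have i0 : Fin N := ⟨0, hN⟩
    have hmap : Measure.map (fun x : Fin N → X => x i0) (volume : Measure (Fin N → X)) = μ := by
      ext s hs
      rw [Measure.map_apply (measurable_pi_apply i0) hs]
      have hpre : (fun x : Fin N → X => x i0) ⁻¹' s
          = Set.pi Set.univ (Function.update (fun _ : Fin N => Set.univ) i0 s) :=
        Set.eval_preimage
      rw [hpre]
      show (Measure.pi fun _ : Fin N => μ) _ = _
      rw [Measure.pi_pi]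
      rw [Fintype.prod_eq_single i0 (fun j hj => by
        simp [Function.update_of_ne hj])]
      simp
    have hexp : ∀ x : Fin N → X, (∑ i : Fin N, ψ (x i)) ^ (2 * k)
        = ∑ a ∈ Finset.piAntidiag (Finset.univ : Finset (Fin N)) (2 * k),
            (Nat.multinomial Finset.univ a : ℝ) * ∏ i : Fin N, ψ (x i) ^ a i :=
      fun x => Finset.sum_pow_eq_sum_piAntidiag Finset.univ (fun i => ψ (x i)) (2 * k)
    have hfe : (fun x : Fin N → X => (∑ i : Fin N, ψ (x i)) ^ (2 * k))
        = fun x => ∑ a ∈ Finset.piAntidiag (Finset.univ : Finset (Fin N)) (2 * k),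
            (Nat.multinomial Finset.univ a : ℝ) * ∏ i : Fin N, ψ (x i) ^ a i :=
      funext hexp
    have hfpos : (0:ℝ) < (2 * k).factorial := by exact_mod_cast (2 * k).factorial_pos
    rw [one_div_mul_eq_div, div_le_iff₀ hfpos]
    by_cases hInt : ∀ a : ℕ, a ≤ 2 * k → Integrable (fun y => ψ y ^ a) μ
    · -- integrable case
      have hterm : ∀ a : Fin N → ℕ, a ∈ Finset.piAntidiag (Finset.univ : Finset (Fin N)) (2 * k) →
          Integrable (fun x : Fin N → X => ∏ i : Fin N, ψ (x i) ^ a i) := by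
        intro a ha
        have hsum : ∑ i : Fin N, a i = 2 * k := (Finset.mem_piAntidiag.1 ha).1
        have hai : ∀ i, a i ≤ 2 * k := fun i =>
          hsum ▸ Finset.single_le_sum (f := fun i => a i) (fun _ _ => Nat.zero_le _) (Finset.mem_univ i)
        exact Integrable.fin_nat_prod (𝕜 := ℝ) (f := fun i y => ψ y ^ a i)
          (fun i => hInt (a i) (hai i))
      have hIeq : (∫ x : Fin N → X, (∑ i : Fin N, ψ (x i)) ^ (2 * k))
          = ∑ a ∈ Finset.piAntidiag (Finset.univ : Finset (Fin N)) (2 * k),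
              (Nat.multinomial Finset.univ a : ℝ) * ∏ i : Fin N, ∫ y, ψ y ^ a i ∂μ := by
        rw [hfe, integral_finset_sum _ (fun a ha => (hterm a ha).const_mul _)]
        refine Finset.sum_congr rfl fun a ha => ?_
        rw [integral_const_mul]
        congr 1
        exact integral_fin_nat_prod_eq_prod (fun i y => ψ y ^ a i)
      have hterm_bound : ∀ a ∈ Finset.piAntidiag (Finset.univ : Finset (Fin N)) (2 * k),
          (Nat.multinomial Finset.univ a : ℝ) * ∏ i : Fin N, ∫ y, ψ y ^ a i ∂μ
            ≤ ((2 * k).factorial : ℝ) * (Real.exp 1 ^ (2 * k) * L ^ (2 * k)) := by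
        intro a ha
        have hsum : ∑ i : Fin N, a i = 2 * k := (Finset.mem_piAntidiag.1 ha).1
        have h1 : ∏ i : Fin N, (∫ y, ψ y ^ a i ∂μ)
            ≤ ∏ i : Fin N, (Real.exp 1 ^ a i * (a i).factorial * L ^ a i) :=
          Finset.prod_le_prod (fun i _ => integral_nonneg fun y => pow_nonneg (hψ0 y) _)
            (fun i _ => smb_moment μ ψ hψ0 L hL0 hL (a i))
        have h2 : ∏ i : Fin N, (Real.exp 1 ^ a i * ((a i).factorial : ℝ) * L ^ a i)
            = Real.exp 1 ^ (2 * k) * L ^ (2 * k) * ∏ i : Fin N, ((a i).factorial : ℝ) := by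
          rw [Finset.prod_mul_distrib, Finset.prod_mul_distrib,
            Finset.prod_pow_eq_pow_sum, Finset.prod_pow_eq_pow_sum, hsum]
          ring
        have h3 : (Nat.multinomial Finset.univ a : ℝ) * ∏ i : Fin N, ((a i).factorial : ℝ)
            = ((2 * k).factorial : ℝ) := by
          have hspec := Nat.multinomial_spec (s := (Finset.univ : Finset (Fin N))) (f := a)
          rw [hsum] at hspec
          have : ((∏ i : Fin N, (a i).factorial) * Nat.multinomial Finset.univ a : ℕ)
              = ((2 * k).factorial : ℕ) := hspec
          push_cast [← this]
          ring
        calc (Nat.multinomial Finset.univ a : ℝ) * ∏ i : Fin N, ∫ y, ψ y ^ a i ∂μ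
            ≤ (Nat.multinomial Finset.univ a : ℝ)
              * (Real.exp 1 ^ (2 * k) * L ^ (2 * k) * ∏ i : Fin N, ((a i).factorial : ℝ)) := by
              refine mul_le_mul_of_nonneg_left ?_ (Nat.cast_nonneg _)
              rw [← h2]; exact h1
          _ = (Real.exp 1 ^ (2 * k) * L ^ (2 * k))
              * ((Nat.multinomial Finset.univ a : ℝ) * ∏ i : Fin N, ((a i).factorial : ℝ)) := by
              ring
          _ = ((2 * k).factorial : ℝ) * (Real.exp 1 ^ (2 * k) * L ^ (2 * k)) := by
              rw [h3]; ring
      calc (∫ x : Fin N → X, (∑ i : Fin N, ψ (x i)) ^ (2 * k))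
          ≤ ∑ _a ∈ Finset.piAntidiag (Finset.univ : Finset (Fin N)) (2 * k),
              ((2 * k).factorial : ℝ) * (Real.exp 1 ^ (2 * k) * L ^ (2 * k)) := by
            rw [hIeq]; exact Finset.sum_le_sum hterm_bound
        _ = ((Finset.piAntidiag (Finset.univ : Finset (Fin N)) (2 * k)).card : ℝ)
              * (((2 * k).factorial : ℝ) * (Real.exp 1 ^ (2 * k) * L ^ (2 * k))) := by
            rw [Finset.sum_const, nsmul_eq_mul]
        _ = Real.exp 1 ^ (2 * k) * L ^ (2 * k) * (((2 * k + N - 1).choose (N - 1)) : ℝ)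
              * ((2 * k).factorial : ℝ) := by
            rw [smb_card_piAntidiag N (2 * k) hN]
            ring
    · -- non-integrable case
      push_neg at hInt
      obtain ⟨a, ha, hna⟩ := hInt
      have hnotF : ¬ Integrable (fun x : Fin N → X => (∑ i : Fin N, ψ (x i)) ^ (2 * k)) := by
        intro hF
        have hg : Integrable (fun x : Fin N → X => ψ (x i0) ^ (2 * k)) := by
          refine hF.mono' (((hmeas.comp (measurable_pi_apply i0)).pow_const _).aestronglyMeasurable) ?_
          refine Filter.Eventually.of_forall fun x => ?_
          rw [Real.norm_of_nonneg (pow_nonneg (hψ0 _) _)]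
          exact pow_le_pow_left₀ (hψ0 _)
            (Finset.single_le_sum (f := fun i => ψ (x i)) (fun i _ => hψ0 (x i))
              (Finset.mem_univ i0)) _
        have h2k : Integrable (fun y => ψ y ^ (2 * k)) μ := by
          rw [← hmap, integrable_map_measure ((hmeas.pow_const _).aestronglyMeasurable)
            (measurable_pi_apply i0).aemeasurable]
          exact hg
        apply hna
        have hdom : Integrable (fun y => 1 + ψ y ^ (2 * k)) μ := (integrable_const 1).add h2k
        refine hdom.mono' ((hmeas.pow_const a).aestronglyMeasurable)
          (Filter.Eventually.of_forall fun y => ?_)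
        rw [Real.norm_of_nonneg (pow_nonneg (hψ0 y) a)]
        rcases le_or_gt (ψ y) 1 with h | h
        · have h1 : ψ y ^ a ≤ 1 := pow_le_one₀ (hψ0 y) h
          nlinarith [pow_nonneg (hψ0 y) (2 * k)]
        · have h1 : ψ y ^ a ≤ ψ y ^ (2 * k) := pow_le_pow_right₀ h.le ha
          nlinarith
      rw [integral_undef hnotF]
      positivity
  · -- second inequality
    have hee : (64:ℝ) ≤ (3 * Real.exp 1)^2 := by nlinarith [Real.exp_one_gt_d9]
    have hcard : (((2*k + N - 1).choose (N-1)) : ℝ) ≤ (3 * Real.exp 1)^(2*k) := by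
      calc (((2*k + N - 1).choose (N-1)) : ℝ) ≤ 2^(2*k + N - 1) := by
            exact_mod_cast smb_choose_le_two_pow (2*k + N - 1) (N-1)
        _ ≤ 2^(6*k) := by
            apply pow_le_pow_right₀ one_le_two
            omega
        _ = (64:ℝ)^k := by
            rw [show (64:ℝ) = 2^6 by norm_num, ← pow_mul]
        _ ≤ ((3 * Real.exp 1)^2)^k := pow_le_pow_left₀ (by norm_num) hee k
        _ = (3 * Real.exp 1)^(2*k) := by rw [← pow_mul]
    have hrw : (3 * Real.exp 1 ^ 2 * L) ^ (2*k)
        = Real.exp 1 ^ (2*k) * L^(2*k) * (3 * Real.exp 1)^(2*k) := by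
      rw [← mul_pow, ← mul_pow]; ring_nf
    rw [hrw]
    exact mul_le_mul_of_nonneg_left hcard (by positivity)
end
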